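/- Let m be a positive integer, p > 0, c ∈ ℝ, and let f(x) = c·e^{-p‖x‖^2} on ℝ^m. Then the Heisenberg product for f attains equality: (∫_{ℝ^m} ‖x‖^2 |f(x)|^2 dx) · (∫_{ℝ^m} ‖ξ‖^2 |𝓕f(ξ)|^2 dξ) = (m^2/4) · (∫_{ℝ^m} |f(x)|^2 dx)^2. -/

import Mathlib

open MeasureTheory

/-- The Fourier transform on `ℝ^m` with the normalization
`𝓕f(ξ) = (2π)^{-m/2} ∫ f(x) e^{-i⟨x,ξ⟩} dx`. -/
noncomputable def fourierTransformEuclid (m : ℕ)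
    (f : EuclideanSpace ℝ (Fin m) → ℂ) (ξ : EuclideanSpace ℝ (Fin m)) : ℂ :=
  ((2 * Real.pi) ^ (-(m : ℝ) / 2) : ℝ) *
    ∫ x : EuclideanSpace ℝ (Fin m),
      Complex.exp (-Complex.I * ((inner ℝ x ξ : ℝ) : ℂ)) * f x

/-!
Both sides are computed in closed form. The Fourier transform of `c e^{-p‖x‖²}` is
`c (2p)^{-m/2} e^{-‖ξ‖²/(4p)}`, again a Gaussian, and for any Gaussian `e^{-a‖x‖²}` in dimension
`m` the second moment is `m/(2a)` times the mass; in polar coordinates this is the Gamma function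
identity `Γ(m/2 + 1) = (m/2) Γ(m/2)`. Hence the two factors on the left are `m/(4p) ‖f‖₂²` and
`m p ‖𝓕f‖₂²`, and `‖𝓕f‖₂ = ‖f‖₂` by a direct computation of both Gaussian integrals.
-/

open Real Set

section GaussianMoment

variable {E : Type*} [NormedAddCommGroup E] [NormedSpace ℝ E] [FiniteDimensional ℝ E]
  [MeasurableSpace E] [BorelSpace E] (μ : Measure E) [μ.IsAddHaarMeasure]

theorem integral_norm_sq_mul_exp_neg_mul_norm_sq {a : ℝ} (ha : 0 < a) :
    ∫ x, ‖x‖ ^ 2 * rexp (-a * ‖x‖ ^ 2) ∂μ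
      = Module.finrank ℝ E / (2 * a) * ∫ x, rexp (-a * ‖x‖ ^ 2) ∂μ := by
  rcases subsingleton_or_nontrivial E with hE | hE
  · simp [Subsingleton.elim _ (0 : E), Module.finrank_zero_of_subsingleton]
  have hmoment (k : ℕ) : ∫ y in Ioi (0 : ℝ), y ^ k * rexp (-a * y ^ 2)
      = a ^ (-((k : ℝ) + 1) / 2) * (1 / 2) * Gamma (((k : ℝ) + 1) / 2) := by
    have := integral_rpow_mul_exp_neg_mul_rpow (p := 2) (q := k) two_pos
      (by linarith [k.cast_nonneg (α := ℝ)]) ha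
    simpa only [rpow_natCast, rpow_two] using this
  obtain ⟨k, hk⟩ : ∃ k, Module.finrank ℝ E = k + 1 :=
    Nat.exists_eq_add_of_le' Module.finrank_pos
  rw [integral_fun_norm_addHaar μ (fun y => y ^ 2 * rexp (-a * y ^ 2)),
    integral_fun_norm_addHaar μ (fun y => rexp (-a * y ^ 2))]
  simp only [smul_eq_mul, ← mul_assoc, ← pow_add, hk, add_tsub_cancel_right, hmoment]
  have hGamma : Gamma ((((k + 2 : ℕ) : ℝ) + 1) / 2)
      = ((k : ℝ) + 1) / 2 * Gamma (((k : ℝ) + 1) / 2) := by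
    rw [← Gamma_add_one (by positivity)]; push_cast; ring_nf
  have hpow : a ^ (-(((k + 2 : ℕ) : ℝ) + 1) / 2) = a⁻¹ * a ^ (-((k : ℝ) + 1) / 2) := by
    rw [← rpow_neg_one, ← rpow_add ha]; push_cast; ring_nf
  rw [hGamma, hpow, nsmul_eq_mul, nsmul_eq_mul]
  push_cast
  field_simp

theorem integral_norm_sq_mul_of_eq_const_mul_exp {g : E → ℝ} {K a : ℝ} (ha : 0 < a)
    (hg : ∀ x, g x = K * rexp (-a * ‖x‖ ^ 2)) :
    ∫ x, ‖x‖ ^ 2 * g x ∂μ = Module.finrank ℝ E / (2 * a) * ∫ x, g x ∂μ := by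
  simp only [hg, mul_left_comm _ K, integral_const_mul,
    integral_norm_sq_mul_exp_neg_mul_norm_sq μ ha]

end GaussianMoment

theorem rpow_neg_mul_div_rpow {a b : ℝ} (ha : 0 < a) (hb : 0 < b) (s : ℝ) :
    a ^ (-s) * (a / b) ^ s = b ^ (-s) := by
  rw [div_rpow ha.le hb.le, rpow_neg ha.le, rpow_neg hb.le]
  field_simp

theorem norm_sq_mul_cexp_neg_mul_sq (c : ℂ) (p t : ℝ) :
    ‖c * Complex.exp (-(p : ℂ) * (t : ℂ) ^ 2)‖ ^ 2 = ‖c‖ ^ 2 * rexp (-(2 * p) * t ^ 2) := by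
  rw [norm_mul, mul_pow, ← Complex.ofReal_pow, ← Complex.ofReal_neg, ← Complex.ofReal_mul,
    Complex.norm_exp_ofReal, ← exp_nat_mul]
  push_cast
  ring_nf

section EuclidGaussian

variable (m : ℕ) {p : ℝ} (c : ℂ)

theorem fourierTransformEuclid_gaussian (hp : 0 < p) (ξ : EuclideanSpace ℝ (Fin m)) :
    fourierTransformEuclid m (fun x => c * Complex.exp (-(p : ℂ) * (‖x‖ : ℂ) ^ 2)) ξ
      = (((2 * p) ^ (-(m : ℝ) / 2) * rexp (-‖ξ‖ ^ 2 / (4 * p)) : ℝ) : ℂ) * c := by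
  have hexp (x : EuclideanSpace ℝ (Fin m)) :
      Complex.exp (-Complex.I * ((inner ℝ x ξ : ℝ) : ℂ)) *
          (c * Complex.exp (-(p : ℂ) * (‖x‖ : ℂ) ^ 2))
        = c * Complex.exp (-(p : ℂ) * ‖x‖ ^ 2 + -Complex.I * ((inner ℝ ξ x : ℝ) : ℂ)) := by
    rw [real_inner_comm, Complex.exp_add]; ring
  have hpow : (π / (p : ℂ)) ^ ((Module.finrank ℝ (EuclideanSpace ℝ (Fin m)) : ℂ) / 2)
      = ((((2 * π) / (2 * p)) ^ ((m : ℝ) / 2) : ℝ) : ℂ) := by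
    rw [mul_div_mul_left _ _ two_ne_zero, Complex.ofReal_cpow (by positivity),
      finrank_euclideanSpace_fin]
    push_cast; rfl
  have harg : (-Complex.I) ^ 2 * (‖ξ‖ : ℂ) ^ 2 / (4 * p) = ((-‖ξ‖ ^ 2 / (4 * p) : ℝ) : ℂ) := by
    rw [neg_sq, Complex.I_sq]; push_cast; ring
  have hgauss := GaussianFourier.integral_cexp_neg_mul_sq_norm_add
    (V := EuclideanSpace ℝ (Fin m)) (b := (p : ℂ)) (by simpa using hp) (-Complex.I) ξ
  rw [hpow, harg, ← Complex.ofReal_exp] at hgauss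
  simp only [fourierTransformEuclid, hexp, integral_const_mul, hgauss, neg_div,
    ← rpow_neg_mul_div_rpow (by positivity : (0 : ℝ) < 2 * π) (by positivity : (0 : ℝ) < 2 * p)]
  push_cast
  ring

theorem norm_sq_fourierTransformEuclid_gaussian (hp : 0 < p) (ξ : EuclideanSpace ℝ (Fin m)) :
    ‖fourierTransformEuclid m (fun x => c * Complex.exp (-(p : ℂ) * (‖x‖ : ℂ) ^ 2)) ξ‖ ^ 2
      = ‖c‖ ^ 2 * (2 * p) ^ (-(m : ℝ)) * rexp (-(2 * p)⁻¹ * ‖ξ‖ ^ 2) := by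
  rw [fourierTransformEuclid_gaussian m c hp, norm_mul, Complex.norm_real,
    norm_of_nonneg (by positivity), mul_pow, mul_pow, ← rpow_natCast, ← rpow_mul (by positivity),
    ← exp_nat_mul]
  push_cast
  ring_nf

theorem integral_norm_sq_fourierTransformEuclid_gaussian (hp : 0 < p) :
    ∫ ξ, ‖fourierTransformEuclid m (fun x => c * Complex.exp (-(p : ℂ) * (‖x‖ : ℂ) ^ 2)) ξ‖ ^ 2
      = ∫ x : EuclideanSpace ℝ (Fin m), ‖c * Complex.exp (-(p : ℂ) * (‖x‖ : ℂ) ^ 2)‖ ^ 2 := by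
  have h2p : 0 < 2 * p := by positivity
  simp only [norm_sq_fourierTransformEuclid_gaussian m c hp, norm_sq_mul_cexp_neg_mul_sq,
    integral_const_mul, GaussianFourier.integral_rexp_neg_mul_sq_norm h2p,
    GaussianFourier.integral_rexp_neg_mul_sq_norm (inv_pos.2 h2p), finrank_euclideanSpace_fin]
  rw [div_inv_eq_mul, mul_rpow pi_pos.le h2p.le, div_rpow pi_pos.le h2p.le,
    show -(m : ℝ) = -((m : ℝ) / 2) - (m : ℝ) / 2 by ring, rpow_sub h2p, rpow_neg h2p.le]
  field_simp

end EuclidGaussian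

theorem stmt_3_general (m : ℕ) (p : ℝ) (hp : 0 < p) (c : ℝ)
    (f : EuclideanSpace ℝ (Fin m) → ℂ)
    (hf : ∀ x, f x = (c : ℂ) * Complex.exp (-(p : ℂ) * (‖x‖ : ℂ) ^ 2)) :
    (∫ x : EuclideanSpace ℝ (Fin m), ‖x‖ ^ 2 * ‖f x‖ ^ 2) *
      (∫ ξ : EuclideanSpace ℝ (Fin m), ‖ξ‖ ^ 2 * ‖fourierTransformEuclid m f ξ‖ ^ 2) =
    ((m : ℝ) ^ 2 / 4) * (∫ x : EuclideanSpace ℝ (Fin m), ‖f x‖ ^ 2) ^ 2 := by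
  obtain rfl : f = fun x => (c : ℂ) * Complex.exp (-(p : ℂ) * (‖x‖ : ℂ) ^ 2) := funext hf
  have h2p : 0 < 2 * p := by positivity
  rw [integral_norm_sq_mul_of_eq_const_mul_exp volume h2p
      (fun x => norm_sq_mul_cexp_neg_mul_sq _ p ‖x‖),
    integral_norm_sq_mul_of_eq_const_mul_exp volume (inv_pos.2 h2p)
      (norm_sq_fourierTransformEuclid_gaussian m _ hp),
    integral_norm_sq_fourierTransformEuclid_gaussian m c hp, finrank_euclideanSpace_fin]
  field_simp
  ring

theorem stmt_3 (m : ℕ) (hm : 0 < m) (p : ℝ) (hp : 0 < p) (c : ℝ)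
    (f : EuclideanSpace ℝ (Fin m) → ℂ)
    (hf : ∀ x, f x = (c : ℂ) * Complex.exp (-(p : ℂ) * (‖x‖ : ℂ) ^ 2)) :
    (∫ x : EuclideanSpace ℝ (Fin m), ‖x‖ ^ 2 * ‖f x‖ ^ 2) *
      (∫ ξ : EuclideanSpace ℝ (Fin m), ‖ξ‖ ^ 2 * ‖fourierTransformEuclid m f ξ‖ ^ 2) =
    ((m : ℝ) ^ 2 / 4) * (∫ x : EuclideanSpace ℝ (Fin m), ‖f x‖ ^ 2) ^ 2 :=
  stmt_3_general m p hp c f hf
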